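/- Let X ∈ ℝ^{m×n} be nonzero with largest and second largest singular values σ₁ and σ₂ (σ₂ = 0 if min(m,n) = 1), and let τ satisfy σ₂ ≤ τ < σ₁. Then X has a unique best rank-one approximation T₁(X) (the unique minimizer of ‖X − Z‖_F over matrices Z of rank at most 1), the function Y ↦ τ‖Y‖_* + ½‖Y − X‖_F² has a unique minimizer Y* over ℝ^{m×n}, and Y* = ((σ₁ − τ)/σ₁)·T₁(X). Consequently Y*/‖Y*‖_F = T₁(X)/‖T₁(X)‖_F, i.e., one step of singular value soft thresholding followed by normalization coincides with one step of best rank-one truncation followed by normalization. -/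

import Mathlib

open Matrix

/-- Frobenius norm of a real matrix. -/
noncomputable def frobNorm {m n : ℕ} (X : Matrix (Fin m) (Fin n) ℝ) : ℝ :=
  Real.sqrt (∑ i, ∑ j, (X i j) ^ 2)

/-- The singular values of `X` (with multiplicity, padded by zeros): the square
roots of the eigenvalues of `Xᵀ * X`. -/
noncomputable def singVals {m n : ℕ} (X : Matrix (Fin m) (Fin n) ℝ) : Fin n → ℝ :=
  fun i => Real.sqrt ((show (Xᵀ * X).IsHermitian from Matrix.isHermitian_conjTranspose_mul_self X).eigenvalues i)

/-- Nuclear norm of a real matrix: the sum of its singular values. -/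
noncomputable def nuclearNorm {m n : ℕ} (X : Matrix (Fin m) (Fin n) ℝ) : ℝ :=
  ∑ i, singVals X i

/-!
Let `v` be a unit eigenvector of `XᵀX` for `σ₁²`, so that `T₁(X) = (Xv)vᵀ`. Since every other
singular value is at most `τ < σ₁`, every `x` satisfies
`‖Xx‖² ≤ σ₁²⟨v,x⟩² + τ²(‖x‖² − ⟨v,x⟩²)`.

For a unit vector `b`, `‖X − abᵀ‖_F² = ‖X‖_F² − ‖Xb‖² + ‖a − Xb‖²`, and the bound above gives
`‖Xb‖² ≤ σ₁² − (σ₁² − τ²)‖b − ⟨v,b⟩v‖²`; this is Eckart–Young, with a strict inequality for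
every rank-one `Z ≠ T₁(X)`.

For `Y = ((σ₁ − τ)/σ₁)·T₁(X)`, the matrix `X − Y` is `X` with `σ₁` lowered to `τ`, so its operator
norm is at most `τ`, and `⟨X − Y, Y⟩ = τ(σ₁ − τ) ≥ τ‖Y‖_*`: `X − Y` is a subgradient of `τ‖·‖_*`
at `Y`. The duality `⟨W, Z⟩ ≤ ‖W‖_op ‖Z‖_*` then gives
`τ‖Z‖_* + ½‖Z − X‖_F² ≥ τ‖Y‖_* + ½‖Y − X‖_F² + ½‖Z − Y‖_F²`, so `Y` is the unique minimizer.
-/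

open Finset

theorem dotProduct_le_sqrt_mul_sqrt {ι : Type*} [Fintype ι] (a b : ι → ℝ) :
    a ⬝ᵥ b ≤ √(a ⬝ᵥ a) * √(b ⬝ᵥ b) := by
  simpa [dotProduct, sq] using Real.sum_mul_le_sqrt_mul_sqrt univ a b

theorem mulVec_dotProduct_mulVec {ι κ : Type*} [Fintype ι] [Fintype κ] (X : Matrix κ ι ℝ)
    (a b : ι → ℝ) :
    (X *ᵥ a) ⬝ᵥ (X *ᵥ b) = a ⬝ᵥ ((Xᵀ * X) *ᵥ b) := by
  rw [← mulVec_mulVec, dotProduct_mulVec a, vecMul_transpose]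

theorem dotProduct_self_nonneg {ι : Type*} [Fintype ι] (a : ι → ℝ) : 0 ≤ a ⬝ᵥ a :=
  Fintype.sum_nonneg fun _ => mul_self_nonneg _

section OrthonormalBasis

variable {ι : Type*} [Fintype ι] (b : OrthonormalBasis ι ℝ (EuclideanSpace ℝ ι))

theorem OrthonormalBasis.dotProduct_self_ofLp (i : ι) : (b i).ofLp ⬝ᵥ (b i).ofLp = 1 := by
  have h := real_inner_self_eq_norm_sq (b i)
  rw [b.orthonormal.1 i, EuclideanSpace.inner_eq_star_dotProduct] at h
  simpa using h

theorem OrthonormalBasis.sum_dotProduct_smul_ofLp (x : ι → ℝ) :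
    ∑ i, ((b i).ofLp ⬝ᵥ x) • (b i).ofLp = x := by
  simpa [EuclideanSpace.inner_eq_star_dotProduct, dotProduct_comm] using
    congrArg WithLp.ofLp (b.sum_repr' (WithLp.toLp 2 x))

theorem OrthonormalBasis.dotProduct_eq_sum (x y : ι → ℝ) :
    x ⬝ᵥ y = ∑ i, ((b i).ofLp ⬝ᵥ x) * ((b i).ofLp ⬝ᵥ y) := by
  conv_lhs => rw [← b.sum_dotProduct_smul_ofLp y]
  rw [dotProduct_sum]
  refine sum_congr rfl fun i _ => ?_
  rw [dotProduct_smul, smul_eq_mul, dotProduct_comm x, mul_comm]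

end OrthonormalBasis

namespace Matrix.IsHermitian

variable {ι : Type*} [Fintype ι] [DecidableEq ι] {A : Matrix ι ι ℝ} (hA : A.IsHermitian)

theorem dotProduct_mulVec_eq_sum (x : ι → ℝ) :
    x ⬝ᵥ (A *ᵥ x) = ∑ i, hA.eigenvalues i * ((hA.eigenvectorBasis i).ofLp ⬝ᵥ x) ^ 2 := by
  conv_lhs => rw [← hA.eigenvectorBasis.sum_dotProduct_smul_ofLp x, mulVec_sum]
  simp only [mulVec_smul, hA.mulVec_eigenvectorBasis, dotProduct_sum, dotProduct_smul,
    smul_eq_mul, hA.eigenvectorBasis.sum_dotProduct_smul_ofLp x]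
  refine sum_congr rfl fun i _ => ?_
  rw [dotProduct_comm]; ring

theorem dotProduct_mulVec_le_of_eigenvalues_le (i₀ : ι) {c : ℝ}
    (h : ∀ i ≠ i₀, hA.eigenvalues i ≤ c) (x : ι → ℝ) :
    x ⬝ᵥ (A *ᵥ x) ≤ hA.eigenvalues i₀ * ((hA.eigenvectorBasis i₀).ofLp ⬝ᵥ x) ^ 2 +
      c * (x ⬝ᵥ x - ((hA.eigenvectorBasis i₀).ofLp ⬝ᵥ x) ^ 2) := by
  rw [hA.dotProduct_mulVec_eq_sum, hA.eigenvectorBasis.dotProduct_eq_sum x x,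
    ← add_sum_erase _ _ (mem_univ i₀), ← add_sum_erase _ _ (mem_univ i₀)]
  simp only [← sq, add_sub_cancel_left, mul_sum, add_le_add_iff_left]
  exact sum_le_sum fun i hi => mul_le_mul_of_nonneg_right (h i (ne_of_mem_erase hi)) (sq_nonneg _)

end Matrix.IsHermitian

section FrobeniusInner

variable {m n : Type*} [Fintype m] [Fintype n]

def frobInner (A B : Matrix m n ℝ) : ℝ := ∑ i, ∑ j, A i j * B i j

theorem frobInner_comm (A B : Matrix m n ℝ) : frobInner A B = frobInner B A := by
  simp only [frobInner, mul_comm]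

theorem frobInner_sub_left (A B C : Matrix m n ℝ) :
    frobInner (A - B) C = frobInner A C - frobInner B C := by
  simp only [frobInner, Matrix.sub_apply, sub_mul, sum_sub_distrib]

theorem frobInner_sub_right (A B C : Matrix m n ℝ) :
    frobInner A (B - C) = frobInner A B - frobInner A C := by
  rw [frobInner_comm, frobInner_sub_left, frobInner_comm B, frobInner_comm C]

theorem frobInner_smul_left (c : ℝ) (A B : Matrix m n ℝ) :
    frobInner (c • A) B = c * frobInner A B := by
  simp only [frobInner, Matrix.smul_apply, smul_eq_mul, mul_sum, mul_assoc]

theorem frobInner_smul_right (c : ℝ) (A B : Matrix m n ℝ) :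
    frobInner A (c • B) = c * frobInner A B := by
  rw [frobInner_comm, frobInner_smul_left, frobInner_comm]

theorem frobInner_vecMulVec (A : Matrix m n ℝ) (a : m → ℝ) (b : n → ℝ) :
    frobInner A (vecMulVec a b) = a ⬝ᵥ (A *ᵥ b) := by
  simp only [frobInner, vecMulVec_apply, dotProduct, mulVec, mul_sum]
  exact sum_congr rfl fun i _ => sum_congr rfl fun j _ => by ring

theorem frobInner_vecMulVec_self (a : m → ℝ) (b : n → ℝ) :
    frobInner (vecMulVec a b) (vecMulVec a b) = (a ⬝ᵥ a) * (b ⬝ᵥ b) := by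
  simp only [frobInner, vecMulVec_apply, dotProduct, sum_mul_sum]
  exact sum_congr rfl fun i _ => sum_congr rfl fun j _ => by ring

theorem frobInner_eq_sum_mulVec (b : OrthonormalBasis n ℝ (EuclideanSpace ℝ n))
    (A B : Matrix m n ℝ) :
    frobInner A B = ∑ k, (A *ᵥ (b k).ofLp) ⬝ᵥ (B *ᵥ (b k).ofLp) := by
  calc frobInner A B = ∑ i, A i ⬝ᵥ B i := rfl
    _ = ∑ i, ∑ k, (A *ᵥ (b k).ofLp) i * (B *ᵥ (b k).ofLp) i :=
      sum_congr rfl fun i _ => (b.dotProduct_eq_sum _ _).trans <| sum_congr rfl fun k _ => by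
        rw [dotProduct_comm, dotProduct_comm (b k).ofLp]; rfl
    _ = _ := sum_comm

end FrobeniusInner

section FrobeniusNorm

variable {m n : ℕ}

theorem frobNorm_sq (A : Matrix (Fin m) (Fin n) ℝ) : frobNorm A ^ 2 = frobInner A A := by
  rw [frobNorm, Real.sq_sqrt (by positivity)]
  simp only [frobInner, sq]

theorem frobNorm_nonneg (A : Matrix (Fin m) (Fin n) ℝ) : 0 ≤ frobNorm A := Real.sqrt_nonneg _

theorem frobNorm_sub_sq (A B : Matrix (Fin m) (Fin n) ℝ) :
    frobNorm (A - B) ^ 2 = frobNorm A ^ 2 - 2 * frobInner A B + frobNorm B ^ 2 := by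
  simp only [frobNorm_sq, frobInner_sub_left, frobInner_sub_right, frobInner_comm B A]
  ring

theorem frobNorm_smul (c : ℝ) (A : Matrix (Fin m) (Fin n) ℝ) :
    frobNorm (c • A) = |c| * frobNorm A := by
  rw [frobNorm, frobNorm, ← Real.sqrt_sq_eq_abs, ← Real.sqrt_mul (sq_nonneg _)]
  simp only [Matrix.smul_apply, smul_eq_mul, mul_pow, mul_sum]

theorem frobNorm_inv_smul_smul_of_pos {c : ℝ} (hc : 0 < c)
    (A : Matrix (Fin m) (Fin n) ℝ) : (frobNorm (c • A))⁻¹ • (c • A) = (frobNorm A)⁻¹ • A := by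
  rw [frobNorm_smul, abs_of_pos hc, smul_smul, _root_.mul_inv_rev, mul_assoc,
    inv_mul_cancel₀ hc.ne', mul_one]

theorem frobNorm_sub_vecMulVec_sq (X : Matrix (Fin m) (Fin n) ℝ) (a : Fin m → ℝ)
    {b : Fin n → ℝ} (hb : b ⬝ᵥ b = 1) :
    frobNorm (X - vecMulVec a b) ^ 2 =
      frobNorm X ^ 2 - (X *ᵥ b) ⬝ᵥ (X *ᵥ b) + (a - X *ᵥ b) ⬝ᵥ (a - X *ᵥ b) := by
  rw [frobNorm_sub_sq, frobNorm_sq (vecMulVec a b), frobInner_vecMulVec, frobInner_vecMulVec_self,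
    hb]
  simp only [sub_dotProduct, dotProduct_sub, dotProduct_comm (X *ᵥ b) a]
  ring

theorem frobNorm_pos {A : Matrix (Fin m) (Fin n) ℝ} (hA : A ≠ 0) : 0 < frobNorm A := by
  obtain ⟨i, j, hij⟩ : ∃ i j, A i j ≠ 0 := by
    by_contra! h
    exact hA (Matrix.ext h)
  refine Real.sqrt_pos.2 <|
    sum_pos' (fun i _ => sum_nonneg fun j _ => sq_nonneg _) ⟨i, mem_univ _, ?_⟩
  exact sum_pos' (fun j _ => sq_nonneg _) ⟨j, mem_univ _, by positivity⟩

theorem normSq_mulVec_eigenvectorBasis (A : Matrix (Fin m) (Fin n) ℝ)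
    (hA : (Aᵀ * A).IsHermitian) (k : Fin n) :
    (A *ᵥ (hA.eigenvectorBasis k).ofLp) ⬝ᵥ (A *ᵥ (hA.eigenvectorBasis k).ofLp) =
      hA.eigenvalues k := by
  rw [mulVec_dotProduct_mulVec, hA.mulVec_eigenvectorBasis, dotProduct_smul,
    hA.eigenvectorBasis.dotProduct_self_ofLp, smul_eq_mul, mul_one]

theorem frobNorm_sq_eq_sum_eigenvalues (A : Matrix (Fin m) (Fin n) ℝ)
    (hA : (Aᵀ * A).IsHermitian) : frobNorm A ^ 2 = ∑ k, hA.eigenvalues k := by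
  simp only [frobNorm_sq, frobInner_eq_sum_mulVec hA.eigenvectorBasis,
    normSq_mulVec_eigenvectorBasis]

end FrobeniusNorm

theorem exists_eq_vecMulVec_of_rank_le_one {m n : Type*} [Fintype m] [Fintype n] [Nonempty n]
    {Z : Matrix m n ℝ} (hZ : Z.rank ≤ 1) : ∃ a b, b ⬝ᵥ b = 1 ∧ Z = vecMulVec a b := by
  classical
  obtain ⟨u, hu⟩ := finrank_le_one_iff.mp hZ
  choose c hc using fun j => hu ⟨Z *ᵥ Pi.single j 1, LinearMap.mem_range_self Z.mulVecLin _⟩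
  have hZuc : Z = vecMulVec u c := Matrix.ext fun i j => by
    simpa [vecMulVec_apply, mul_comm] using (congrFun (congrArg Subtype.val (hc j)) i).symm
  by_cases hc0 : c = 0
  · obtain ⟨j⟩ := ‹Nonempty n›
    exact ⟨0, Pi.single j 1, by simp, by simp [hZuc, hc0, vecMulVec]⟩
  have hr : 0 < √(c ⬝ᵥ c) :=
    Real.sqrt_pos.2 ((dotProduct_self_nonneg c).lt_of_ne' (dotProduct_self_eq_zero.not.2 hc0))
  refine ⟨√(c ⬝ᵥ c) • (u : m → ℝ), (√(c ⬝ᵥ c))⁻¹ • c, ?_, ?_⟩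
  · rw [smul_dotProduct, dotProduct_smul, smul_eq_mul, smul_eq_mul, ← mul_assoc, ← sq, inv_pow,
      Real.sq_sqrt (dotProduct_self_nonneg c), inv_mul_cancel₀ (Real.sqrt_pos.1 hr).ne']
  · rw [smul_vecMulVec, vecMulVec_smul, smul_smul, mul_inv_cancel₀ hr.ne', one_smul]
    exact hZuc

section NuclearNorm

variable {m n : ℕ}

theorem eigenvalues_transpose_mul_self_nonneg (A : Matrix (Fin m) (Fin n) ℝ)
    (hA : (Aᵀ * A).IsHermitian) (k : Fin n) : 0 ≤ hA.eigenvalues k := by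
  have hpsd := posSemidef_conjTranspose_mul_self A
  rw [conjTranspose_eq_transpose_of_trivial] at hpsd
  exact hpsd.eigenvalues_nonneg k

theorem singVals_eq (A : Matrix (Fin m) (Fin n) ℝ) (hA : (Aᵀ * A).IsHermitian) (k : Fin n) :
    singVals A k = √(hA.eigenvalues k) := rfl

theorem nuclearNorm_le_sqrt_rank_mul_frobNorm (A : Matrix (Fin m) (Fin n) ℝ) :
    nuclearNorm A ≤ √A.rank * frobNorm A := by
  have hA : (Aᵀ * A).IsHermitian := isHermitian_conjTranspose_mul_self A
  have hμ := eigenvalues_transpose_mul_self_nonneg A hA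
  let support : Fin n → ℝ := fun k => if hA.eigenvalues k ≠ 0 then 1 else 0
  have hrank : ∑ k, support k = A.rank := by
    rw [sum_boole, ← rank_transpose_mul_self, hA.rank_eq_card_non_zero_eigs, Fintype.card_subtype]
  calc nuclearNorm A = ∑ k, √(support k) * √(hA.eigenvalues k) := by
        refine sum_congr rfl fun k _ => ?_
        by_cases hk : hA.eigenvalues k = 0 <;> simp [support, hk, singVals_eq A hA]
    _ ≤ √(∑ k, support k) * √(∑ k, hA.eigenvalues k) :=
        Real.sum_sqrt_mul_sqrt_le _ (fun k => by positivity) hμ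
    _ = √A.rank * frobNorm A := by
        rw [hrank, ← frobNorm_sq_eq_sum_eigenvalues A hA, Real.sqrt_sq (frobNorm_nonneg A)]

theorem frobInner_le_mul_nuclearNorm {W : Matrix (Fin m) (Fin n) ℝ} {τ : ℝ} (hτ : 0 ≤ τ)
    (hW : ∀ x, (W *ᵥ x) ⬝ᵥ (W *ᵥ x) ≤ τ ^ 2 * (x ⬝ᵥ x)) (Z : Matrix (Fin m) (Fin n) ℝ) :
    frobInner W Z ≤ τ * nuclearNorm Z := by
  have hZ : (Zᵀ * Z).IsHermitian := isHermitian_conjTranspose_mul_self Z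
  rw [frobInner_eq_sum_mulVec hZ.eigenvectorBasis, nuclearNorm, mul_sum]
  refine sum_le_sum fun k _ => ?_
  set w := (hZ.eigenvectorBasis k).ofLp
  calc (W *ᵥ w) ⬝ᵥ (Z *ᵥ w) ≤ √((W *ᵥ w) ⬝ᵥ (W *ᵥ w)) * √((Z *ᵥ w) ⬝ᵥ (Z *ᵥ w)) :=
        dotProduct_le_sqrt_mul_sqrt _ _
    _ ≤ √(τ ^ 2) * √(hZ.eigenvalues k) := by
        rw [normSq_mulVec_eigenvectorBasis]
        gcongr
        simpa [w, hZ.eigenvectorBasis.dotProduct_self_ofLp] using hW w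
    _ = τ * singVals Z k := by rw [Real.sqrt_sq hτ, singVals_eq Z hZ]

end NuclearNorm

theorem and_forall_le_iff_eq_of_lt {α β : Type*} [Preorder β] {p : α → Prop} {f : α → β} {y : α}
    (hy : p y) (h : ∀ z, p z → z ≠ y → f y < f z) (x : α) :
    (p x ∧ ∀ z, p z → f x ≤ f z) ↔ x = y := by
  refine ⟨fun ⟨hx, hmin⟩ => by_contra fun hne => (h x hx hne).not_ge (hmin y hy), ?_⟩
  rintro rfl
  refine ⟨hy, fun z hz => ?_⟩
  rcases eq_or_ne z x with rfl | hne
  · exact le_rfl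
  · exact (h z hz hne).le

section Shrinkage

variable {m n : ℕ}

noncomputable def shrinkageObjective (τ : ℝ) (X Y : Matrix (Fin m) (Fin n) ℝ) : ℝ :=
  τ * nuclearNorm Y + 1 / 2 * frobNorm (Y - X) ^ 2

theorem shrinkageObjective_add_le {τ : ℝ} {X Y : Matrix (Fin m) (Fin n) ℝ} (hτ : 0 ≤ τ)
    (hop : ∀ x, ((X - Y) *ᵥ x) ⬝ᵥ ((X - Y) *ᵥ x) ≤ τ ^ 2 * (x ⬝ᵥ x))
    (hY : τ * nuclearNorm Y ≤ frobInner (X - Y) Y) (Z : Matrix (Fin m) (Fin n) ℝ) :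
    shrinkageObjective τ X Y + 1 / 2 * frobNorm (Z - Y) ^ 2 ≤ shrinkageObjective τ X Z := by
  have hZ := frobInner_le_mul_nuclearNorm hτ hop Z
  rw [frobInner_sub_left] at hZ hY
  rw [← frobNorm_sq] at hY
  simp only [shrinkageObjective, frobNorm_sub_sq]
  linarith [frobInner_comm X Z, frobInner_comm Y Z, frobInner_comm X Y]

theorem shrinkageObjective_lt {τ : ℝ} {X Y : Matrix (Fin m) (Fin n) ℝ} (hτ : 0 ≤ τ)
    (hop : ∀ x, ((X - Y) *ᵥ x) ⬝ᵥ ((X - Y) *ᵥ x) ≤ τ ^ 2 * (x ⬝ᵥ x))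
    (hY : τ * nuclearNorm Y ≤ frobInner (X - Y) Y) {Z : Matrix (Fin m) (Fin n) ℝ} (hZ : Z ≠ Y) :
    shrinkageObjective τ X Y < shrinkageObjective τ X Z := by
  have := frobNorm_pos (sub_ne_zero.2 hZ)
  linarith [shrinkageObjective_add_le hτ hop hY Z, pow_pos this 2]

end Shrinkage

/-- The last field says that `X` has no singular value above `τ` on the orthogonal complement
of `v`. -/
structure IsLeadingSingularVector {m n : Type*} [Fintype m] [Fintype n]
    (X : Matrix m n ℝ) (v : n → ℝ) (σ₁ τ : ℝ) : Prop where
  dotProduct_self : v ⬝ᵥ v = 1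
  transpose_mul_self_mulVec : (Xᵀ * X) *ᵥ v = σ₁ ^ 2 • v
  normSq_mulVec_le : ∀ x, (X *ᵥ x) ⬝ᵥ (X *ᵥ x) ≤
    σ₁ ^ 2 * (v ⬝ᵥ x) ^ 2 + τ ^ 2 * (x ⬝ᵥ x - (v ⬝ᵥ x) ^ 2)

theorem exists_isLeadingSingularVector {m n : ℕ} {X : Matrix (Fin m) (Fin n) ℝ} {i₀ : Fin n}
    {σ₁ τ : ℝ} (htop : singVals X i₀ = σ₁) (hgap : ∀ i ≠ i₀, singVals X i ≤ τ) :
    ∃ v, IsLeadingSingularVector X v σ₁ τ := by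
  have hA : (Xᵀ * X).IsHermitian := isHermitian_conjTranspose_mul_self X
  have htop' : hA.eigenvalues i₀ = σ₁ ^ 2 := by
    rw [← htop, singVals_eq X hA, Real.sq_sqrt (eigenvalues_transpose_mul_self_nonneg X hA i₀)]
  have hgap' : ∀ i ≠ i₀, hA.eigenvalues i ≤ τ ^ 2 := fun i hi =>
    (Real.sqrt_le_iff.1 ((singVals_eq X hA i).symm.trans_le (hgap i hi))).2
  refine ⟨(hA.eigenvectorBasis i₀).ofLp, hA.eigenvectorBasis.dotProduct_self_ofLp i₀, ?_,
    fun x => ?_⟩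
  · rw [hA.mulVec_eigenvectorBasis, htop']
  · rw [mulVec_dotProduct_mulVec, ← htop']
    exact hA.dotProduct_mulVec_le_of_eigenvalues_le i₀ hgap' x

namespace IsLeadingSingularVector

variable {m n : ℕ} {X : Matrix (Fin m) (Fin n) ℝ} {v : Fin n → ℝ} {σ₁ τ : ℝ}

theorem mulVec_dotProduct_mulVec (hv : IsLeadingSingularVector X v σ₁ τ) (x : Fin n → ℝ) :
    (X *ᵥ v) ⬝ᵥ (X *ᵥ x) = σ₁ ^ 2 * (v ⬝ᵥ x) := by
  rw [dotProduct_comm, _root_.mulVec_dotProduct_mulVec, hv.transpose_mul_self_mulVec,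
    dotProduct_smul, smul_eq_mul, dotProduct_comm]

theorem frobInner_vecMulVec (hv : IsLeadingSingularVector X v σ₁ τ) :
    frobInner X (vecMulVec (X *ᵥ v) v) = σ₁ ^ 2 := by
  rw [_root_.frobInner_vecMulVec, hv.mulVec_dotProduct_mulVec, hv.dotProduct_self, mul_one]

theorem frobNorm_vecMulVec_sq (hv : IsLeadingSingularVector X v σ₁ τ) :
    frobNorm (vecMulVec (X *ᵥ v) v) ^ 2 = σ₁ ^ 2 := by
  rw [frobNorm_sq, frobInner_vecMulVec_self, hv.mulVec_dotProduct_mulVec, hv.dotProduct_self,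
    mul_one, mul_one]

theorem frobNorm_sub_lt (hv : IsLeadingSingularVector X v σ₁ τ) (hτσ : τ ^ 2 < σ₁ ^ 2)
    {a : Fin m → ℝ} {b : Fin n → ℝ} (hb : b ⬝ᵥ b = 1)
    (hne : vecMulVec a b ≠ vecMulVec (X *ᵥ v) v) :
    frobNorm (X - vecMulVec (X *ᵥ v) v) < frobNorm (X - vecMulVec a b) := by
  set c := v ⬝ᵥ b
  have hres : (b - c • v) ⬝ᵥ (b - c • v) = 1 - c ^ 2 := by
    simp only [sub_dotProduct, dotProduct_sub, smul_dotProduct, dotProduct_smul, smul_eq_mul,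
      hb, hv.dotProduct_self, dotProduct_comm b v]
    ring
  have hXb := hv.normSq_mulVec_le b
  rw [hb] at hXb
  refine lt_of_pow_lt_pow_left₀ 2 (frobNorm_nonneg _) ?_
  rw [frobNorm_sub_vecMulVec_sq X _ hv.dotProduct_self, frobNorm_sub_vecMulVec_sq X a hb, sub_self,
    zero_dotProduct, add_zero, hv.mulVec_dotProduct_mulVec, hv.dotProduct_self, mul_one]
  by_contra! hle
  have hres0 := dotProduct_self_nonneg (b - c • v)
  have ha0 := dotProduct_self_nonneg (a - X *ᵥ b)
  have hb' : b = c • v := sub_eq_zero.1 <| dotProduct_self_eq_zero.1 <| by nlinarith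
  have ha : a = X *ᵥ b := sub_eq_zero.1 <| dotProduct_self_eq_zero.1 <| by nlinarith
  have hc : c * c = 1 := by
    rw [← hb, hb', smul_dotProduct, dotProduct_smul, hv.dotProduct_self, smul_eq_mul, smul_eq_mul,
      mul_one]
  apply hne
  rw [ha, hb', mulVec_smul, smul_vecMulVec, vecMulVec_smul, smul_smul, hc, one_smul]

theorem normSq_sub_smul_vecMulVec_mulVec_le (hv : IsLeadingSingularVector X v σ₁ τ)
    (hσ₁ : σ₁ ≠ 0) (x : Fin n → ℝ) :
    ((X - ((σ₁ - τ) / σ₁) • vecMulVec (X *ᵥ v) v) *ᵥ x) ⬝ᵥ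
      ((X - ((σ₁ - τ) / σ₁) • vecMulVec (X *ᵥ v) v) *ᵥ x) ≤ τ ^ 2 * (x ⬝ᵥ x) := by
  set k := (σ₁ - τ) / σ₁
  have hk : k * σ₁ = σ₁ - τ := div_mul_cancel₀ _ hσ₁
  have hW : (X - k • vecMulVec (X *ᵥ v) v) *ᵥ x = X *ᵥ x - (k * (v ⬝ᵥ x)) • (X *ᵥ v) := by
    rw [sub_mulVec, smul_mulVec, vecMulVec_mulVec, op_smul_eq_smul, smul_smul]
  have hgap := hv.normSq_mulVec_le x
  rw [hW]
  simp only [sub_dotProduct, dotProduct_sub, smul_dotProduct, dotProduct_smul, smul_eq_mul,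
    hv.mulVec_dotProduct_mulVec, dotProduct_comm (X *ᵥ x) (X *ᵥ v), hv.dotProduct_self]
  linear_combination hgap + (v ⬝ᵥ x) ^ 2 * (k * σ₁ + (σ₁ - τ) - 2 * σ₁) * hk

theorem mul_nuclearNorm_le_frobInner (hv : IsLeadingSingularVector X v σ₁ τ) (hσ₁ : 0 < σ₁)
    (hτ : 0 ≤ τ) (hτσ : τ ≤ σ₁) :
    τ * nuclearNorm (((σ₁ - τ) / σ₁) • vecMulVec (X *ᵥ v) v) ≤
      frobInner (X - ((σ₁ - τ) / σ₁) • vecMulVec (X *ᵥ v) v)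
        (((σ₁ - τ) / σ₁) • vecMulVec (X *ᵥ v) v) := by
  set k := (σ₁ - τ) / σ₁
  have hk : k * σ₁ = σ₁ - τ := div_mul_cancel₀ _ hσ₁.ne'
  have hk0 : 0 ≤ k := div_nonneg (sub_nonneg.2 hτσ) hσ₁.le
  have hT : frobNorm (vecMulVec (X *ᵥ v) v) = σ₁ :=
    (sq_eq_sq₀ (frobNorm_nonneg _) hσ₁.le).1 hv.frobNorm_vecMulVec_sq
  have hrank : (k • vecMulVec (X *ᵥ v) v).rank ≤ 1 := by
    rw [← smul_vecMulVec]
    exact rank_vecMulVec_le _ _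
  have hnuc : nuclearNorm (k • vecMulVec (X *ᵥ v) v) ≤ σ₁ - τ :=
    calc nuclearNorm (k • vecMulVec (X *ᵥ v) v)
        ≤ √(k • vecMulVec (X *ᵥ v) v).rank * frobNorm (k • vecMulVec (X *ᵥ v) v) :=
          nuclearNorm_le_sqrt_rank_mul_frobNorm _
      _ ≤ 1 * (k * σ₁) := by
          rw [frobNorm_smul, abs_of_nonneg hk0, hT]
          gcongr
          exact Real.sqrt_le_one.2 (by exact_mod_cast hrank)
      _ = σ₁ - τ := by rw [one_mul, hk]
  rw [frobInner_sub_left, frobInner_smul_right, frobInner_smul_left, frobInner_smul_right,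
    hv.frobInner_vecMulVec, ← frobNorm_sq, hv.frobNorm_vecMulVec_sq]
  calc τ * nuclearNorm (k • vecMulVec (X *ᵥ v) v) ≤ τ * (σ₁ - τ) :=
        mul_le_mul_of_nonneg_left hnuc hτ
    _ = k * σ₁ ^ 2 - k * (k * σ₁ ^ 2) := by linear_combination (k * σ₁ - τ) * hk

end IsLeadingSingularVector

theorem softThresholding_eq_rankOne_truncation_general {m n : ℕ}
    (X : Matrix (Fin m) (Fin n) ℝ)
    (σ₁ σ₂ τ : ℝ)
    (hσ₂ : ∃ i₀ : Fin n, singVals X i₀ = σ₁ ∧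
        IsGreatest (insert (0 : ℝ) {s : ℝ | ∃ i : Fin n, i ≠ i₀ ∧ singVals X i = s}) σ₂)
    (hτ₁ : σ₂ ≤ τ) (hτ₂ : τ < σ₁) :
    (∃! T : Matrix (Fin m) (Fin n) ℝ, T.rank ≤ 1 ∧
        ∀ Z : Matrix (Fin m) (Fin n) ℝ, Z.rank ≤ 1 →
          frobNorm (X - T) ≤ frobNorm (X - Z)) ∧
    (∃! Y : Matrix (Fin m) (Fin n) ℝ, ∀ Z : Matrix (Fin m) (Fin n) ℝ,
        τ * nuclearNorm Y + (1 / 2) * frobNorm (Y - X) ^ 2 ≤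
          τ * nuclearNorm Z + (1 / 2) * frobNorm (Z - X) ^ 2) ∧
    ∀ T Y : Matrix (Fin m) (Fin n) ℝ,
      (T.rank ≤ 1 ∧ ∀ Z : Matrix (Fin m) (Fin n) ℝ, Z.rank ≤ 1 →
          frobNorm (X - T) ≤ frobNorm (X - Z)) →
      (∀ Z : Matrix (Fin m) (Fin n) ℝ,
          τ * nuclearNorm Y + (1 / 2) * frobNorm (Y - X) ^ 2 ≤
            τ * nuclearNorm Z + (1 / 2) * frobNorm (Z - X) ^ 2) →
      Y = ((σ₁ - τ) / σ₁) • T ∧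
      (frobNorm Y)⁻¹ • Y = (frobNorm T)⁻¹ • T := by
  obtain ⟨i₀, htop, hσ₂⟩ := hσ₂
  have hτ : 0 ≤ τ := (hσ₂.2 (Set.mem_insert 0 _)).trans hτ₁
  have hσ₁ : 0 < σ₁ := hτ.trans_lt hτ₂
  obtain ⟨v, hv⟩ := exists_isLeadingSingularVector htop
    fun i hi => (hσ₂.2 (Set.mem_insert_of_mem _ ⟨i, hi, rfl⟩)).trans hτ₁
  have hT (T : Matrix (Fin m) (Fin n) ℝ) :
      (T.rank ≤ 1 ∧ ∀ Z : Matrix (Fin m) (Fin n) ℝ, Z.rank ≤ 1 →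
        frobNorm (X - T) ≤ frobNorm (X - Z)) ↔ T = vecMulVec (X *ᵥ v) v := by
    refine and_forall_le_iff_eq_of_lt (p := fun Z => Z.rank ≤ 1) (f := fun Z => frobNorm (X - Z))
      (rank_vecMulVec_le _ _) (fun Z hZ hne => ?_) T
    have : Nonempty (Fin n) := ⟨i₀⟩
    obtain ⟨a, b, hb, rfl⟩ := exists_eq_vecMulVec_of_rank_le_one hZ
    exact hv.frobNorm_sub_lt (pow_lt_pow_left₀ hτ₂ hτ two_ne_zero) hb hne
  have hY (Y : Matrix (Fin m) (Fin n) ℝ) :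
      (∀ Z, shrinkageObjective τ X Y ≤ shrinkageObjective τ X Z) ↔
        Y = ((σ₁ - τ) / σ₁) • vecMulVec (X *ᵥ v) v := by
    simpa only [true_and, forall_const] using and_forall_le_iff_eq_of_lt (p := fun _ => True)
      (f := shrinkageObjective τ X) trivial (fun Z _ hne =>
      shrinkageObjective_lt hτ (hv.normSq_sub_smul_vecMulVec_mulVec_le hσ₁.ne')
        (hv.mul_nuclearNorm_le_frobInner hσ₁ hτ hτ₂.le) hne) Y
  refine ⟨⟨_, (hT _).2 rfl, fun T h => (hT T).1 h⟩, ⟨_, (hY _).2 rfl, fun Y h => (hY Y).1 h⟩,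
    fun T Y hT' hY' => ?_⟩
  obtain rfl := (hT T).1 hT'
  obtain rfl := (hY Y).1 hY'
  exact ⟨rfl, frobNorm_inv_smul_smul_of_pos (div_pos (sub_pos.2 hτ₂) hσ₁) _⟩

/-- If `σ₂ ≤ τ < σ₁`, then `X` has a unique best rank-one approximation `T₁(X)`,
the soft-thresholding objective `Y ↦ τ‖Y‖_* + ½‖Y − X‖_F²` has a unique minimizer
`Y*`, and `Y* = ((σ₁−τ)/σ₁)·T₁(X)`; consequently soft thresholding followed by
normalization coincides with rank-one truncation followed by normalization. -/
theorem softThresholding_eq_rankOne_truncation {m n : ℕ}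
    (X : Matrix (Fin m) (Fin n) ℝ) (hX : X ≠ 0)
    (σ₁ σ₂ τ : ℝ)
    (hσ₁ : IsGreatest (Set.range (singVals X)) σ₁)
    (hσ₂ : ∃ i₀ : Fin n, singVals X i₀ = σ₁ ∧
        IsGreatest (insert (0 : ℝ) {s : ℝ | ∃ i : Fin n, i ≠ i₀ ∧ singVals X i = s}) σ₂)
    (hτ₁ : σ₂ ≤ τ) (hτ₂ : τ < σ₁) :
    (∃! T : Matrix (Fin m) (Fin n) ℝ, T.rank ≤ 1 ∧
        ∀ Z : Matrix (Fin m) (Fin n) ℝ, Z.rank ≤ 1 →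
          frobNorm (X - T) ≤ frobNorm (X - Z)) ∧
    (∃! Y : Matrix (Fin m) (Fin n) ℝ, ∀ Z : Matrix (Fin m) (Fin n) ℝ,
        τ * nuclearNorm Y + (1 / 2) * frobNorm (Y - X) ^ 2 ≤
          τ * nuclearNorm Z + (1 / 2) * frobNorm (Z - X) ^ 2) ∧
    ∀ T Y : Matrix (Fin m) (Fin n) ℝ,
      (T.rank ≤ 1 ∧ ∀ Z : Matrix (Fin m) (Fin n) ℝ, Z.rank ≤ 1 →
          frobNorm (X - T) ≤ frobNorm (X - Z)) →
      (∀ Z : Matrix (Fin m) (Fin n) ℝ,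
          τ * nuclearNorm Y + (1 / 2) * frobNorm (Y - X) ^ 2 ≤
            τ * nuclearNorm Z + (1 / 2) * frobNorm (Z - X) ^ 2) →
      Y = ((σ₁ - τ) / σ₁) • T ∧
      (frobNorm Y)⁻¹ • Y = (frobNorm T)⁻¹ • T :=
  softThresholding_eq_rankOne_truncation_general X σ₁ σ₂ τ hσ₂ hτ₁ hτ₂
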